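/- arXiv:1812.11617 — 8 statements merged into one kernel-verified Lean document; each statement's English description precedes it below -/
import Mathlib

section
/- Let T be the sequence defined by T(0)=T(1)=0, T(2)=1, and T(n+3)=T(n+2)+3T(n+1)+9T(n) for all n≥0. For positive reals a,b,c, define g by g(0)=a, g(1)=b, g(2)=c, and g(n+3) = (g(n+2)·g(n+1)·g(n))^(1/3). Then for all n≥0, g(n+2) = (a^T(n+1) · b^(T(n+1)+3T(n)) · c^T(n+2))^(3^(-n)). -/
theorem stmt0 (T : ℕ → ℕ) (hT0 : T 0 = 0) (hT1 : T 1 = 0) (hT2 : T 2 = 1)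
    (hT : ∀ n, T (n+3) = T (n+2) + 3 * T (n+1) + 9 * T n)
    (a b c : ℝ) (ha : 0 < a) (hb : 0 < b) (hc : 0 < c)
    (g : ℕ → ℝ) (hg0 : g 0 = a) (hg1 : g 1 = b) (hg2 : g 2 = c)
    (hg : ∀ n, g (n+3) = (g (n+2) * g (n+1) * g n) ^ ((1:ℝ)/3)) :
    ∀ n, g (n+2) =
      (a ^ (T (n+1) : ℝ) * b ^ ((T (n+1) : ℝ) + 3 * (T n : ℝ)) * c ^ (T (n+2) : ℝ))
        ^ ((3:ℝ) ^ (-(n:ℝ))) := by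
  -- positivity of g
  have hgpos : ∀ n, 0 < g n := by
    have H : ∀ n, 0 < g n ∧ 0 < g (n+1) ∧ 0 < g (n+2) := by
      intro n
      induction n with
      | zero => exact ⟨hg0 ▸ ha, hg1 ▸ hb, hg2 ▸ hc⟩
      | succ k ih =>
        refine ⟨ih.2.1, ih.2.2, ?_⟩
        rw [hg k]
        exact Real.rpow_pos_of_pos (mul_pos (mul_pos ih.2.2 ih.2.1) ih.1) _
    exact fun n => (H n).1
  set La := Real.log a with hLa
  set Lb := Real.log b with hLb
  set Lc := Real.log c with hLc
  have key : ∀ n, Real.log (g (n+2)) =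
      ((3:ℝ)^n)⁻¹ * ((T (n+1) : ℝ) * La + ((T (n+1) : ℝ) + 3 * (T n : ℝ)) * Lb
        + (T (n+2) : ℝ) * Lc) := by
    have logstep : ∀ n, Real.log (g (n+3)) =
        (1/3) * (Real.log (g (n+2)) + Real.log (g (n+1)) + Real.log (g n)) := by
      intro n
      rw [hg n, Real.log_rpow (mul_pos (mul_pos (hgpos _) (hgpos _)) (hgpos _)),
        Real.log_mul (mul_pos (hgpos _) (hgpos _)).ne' (hgpos n).ne',
        Real.log_mul (hgpos _).ne' (hgpos _).ne']
    have H : ∀ n, (Real.log (g (n+2)) =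
        ((3:ℝ)^n)⁻¹ * ((T (n+1) : ℝ) * La + ((T (n+1) : ℝ) + 3 * (T n : ℝ)) * Lb
          + (T (n+2) : ℝ) * Lc)) ∧
        (Real.log (g (n+3)) =
        ((3:ℝ)^(n+1))⁻¹ * ((T (n+2) : ℝ) * La + ((T (n+2) : ℝ) + 3 * (T (n+1) : ℝ)) * Lb
          + (T (n+3) : ℝ) * Lc)) ∧
        (Real.log (g (n+4)) =
        ((3:ℝ)^(n+2))⁻¹ * ((T (n+3) : ℝ) * La + ((T (n+3) : ℝ) + 3 * (T (n+2) : ℝ)) * Lb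
          + (T (n+4) : ℝ) * Lc)) := by
      intro n
      induction n with
      | zero =>
        have hT3 : T 3 = 1 := by rw [hT 0, hT0, hT1, hT2]
        have hT4 : T 4 = 4 := by rw [hT 1, hT1, hT2, hT3]
        refine ⟨?_, ?_, ?_⟩
        · rw [hg2, hT0, hT1, hT2]; push_cast; ring
        · rw [logstep 0, hg0, hg1, hg2, hT1, hT2, hT3]; push_cast; ring
        · rw [logstep 1, logstep 0, hg0, hg1, hg2, hT2, hT3, hT4]; push_cast; ring
      | succ k ih =>
        obtain ⟨h0, h1, h2⟩ := ih
        refine ⟨h1, h2, ?_⟩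
        rw [show k+1+4 = (k+2)+3 by ring, logstep (k+2),
          show k+2+2 = k+4 by ring, show k+2+1 = k+3 by ring, h2, h1, h0,
          hT (k+2), hT (k+1), hT k]
        push_cast
        have h3 : (3:ℝ)^(k+1+2) = 3 * 3^(k+2) := by ring
        have h4 : (3:ℝ)^(k+2) = 3 * 3^(k+1) := by ring
        have h5 : (3:ℝ)^(k+1) = 3 * 3^k := by ring
        have hp : (0:ℝ) < 3^k := by positivity
        rw [h3, h4, h5]
        field_simp
        ring
    exact fun n => (H n).1
  intro n
  have hRpos : 0 < (a ^ (T (n+1) : ℝ) * b ^ ((T (n+1) : ℝ) + 3 * (T n : ℝ))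
      * c ^ (T (n+2) : ℝ)) ^ ((3:ℝ) ^ (-(n:ℝ))) := by positivity
  have hlog : Real.log ((a ^ (T (n+1) : ℝ) * b ^ ((T (n+1) : ℝ) + 3 * (T n : ℝ))
      * c ^ (T (n+2) : ℝ)) ^ ((3:ℝ) ^ (-(n:ℝ)))) = Real.log (g (n+2)) := by
    rw [Real.log_rpow (by positivity),
      Real.log_mul (by positivity) (by positivity),
      Real.log_mul (by positivity) (by positivity),
      Real.log_rpow ha, Real.log_rpow hb, Real.log_rpow hc,
      key n, Real.rpow_neg (by norm_num), Real.rpow_natCast]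
  calc g (n+2) = Real.exp (Real.log (g (n+2))) := (Real.exp_log (hgpos _)).symm
    _ = _ := by rw [← hlog]; exact Real.exp_log hRpos
end

section
/- Let a,b,c be positive reals and define g by g(0)=a, g(1)=b, g(2)=c, and g(n+3) = (g(n+2)·g(n+1)·g(n))^(1/3) for all n≥0. Then lim_{n→∞} g(n+1)/g(n) = 1. -/
theorem stmt1 (a b c : ℝ) (ha : 0 < a) (hb : 0 < b) (hc : 0 < c)
    (g : ℕ → ℝ) (hg0 : g 0 = a) (hg1 : g 1 = b) (hg2 : g 2 = c)
    (hg : ∀ n, g (n+3) = (g (n+2) * g (n+1) * g n) ^ ((1:ℝ)/3)) :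
    Filter.Tendsto (fun n => g (n+1) / g n) Filter.atTop (nhds 1) := by
  -- positivity
  have hpos3 : ∀ n, 0 < g n ∧ 0 < g (n+1) ∧ 0 < g (n+2) := by
    intro n
    induction n with
    | zero => exact ⟨hg0 ▸ ha, hg1 ▸ hb, hg2 ▸ hc⟩
    | succ k ih =>
      obtain ⟨h0, h1, h2⟩ := ih
      refine ⟨h1, h2, ?_⟩
      rw [hg k]
      positivity
  have hpos : ∀ n, 0 < g n := fun n => (hpos3 n).1
  set L : ℕ → ℝ := fun n => Real.log (g n) with hLdef
  have hL : ∀ n, L (n+3) = (L (n+2) + L (n+1) + L n)/3 := by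
    intro n
    simp only [hLdef]
    rw [hg n, Real.log_rpow (mul_pos (mul_pos (hpos (n+2)) (hpos (n+1))) (hpos n)),
      Real.log_mul (ne_of_gt (mul_pos (hpos (n+2)) (hpos (n+1)))) (ne_of_gt (hpos n)),
      Real.log_mul (ne_of_gt (hpos (n+2))) (ne_of_gt (hpos (n+1)))]
    ring
  obtain ⟨d, hddef⟩ : ∃ d : ℕ → ℝ, ∀ n, d n = L (n+1) - L n := ⟨_, fun _ => rfl⟩
  have hd : ∀ n, d (n+2) = (-(2*d (n+1)) - d n)/3 := by
    intro n
    rw [hddef, hddef, hddef]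
    have := hL n
    have h3 : n + 2 + 1 = n + 3 := by ring
    rw [h3, this]
    ring
  obtain ⟨m, hmdef⟩ : ∃ m : ℕ → ℝ, ∀ n, m n = max |d n| |d (n+1)| := ⟨_, fun _ => rfl⟩
  have hdm : ∀ n, |d n| ≤ m n := fun n => (hmdef n) ▸ le_max_left _ _
  have hdm1 : ∀ n, |d (n+1)| ≤ m n := fun n => (hmdef n) ▸ le_max_right _ _
  have hmnonneg : ∀ n, 0 ≤ m n := fun n => le_trans (abs_nonneg _) (hdm n)
  have hb2 : ∀ n, |d (n+2)| ≤ m n := by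
    intro n
    obtain ⟨hx1, hx2⟩ := abs_le.mp (hdm1 n)
    obtain ⟨hy1, hy2⟩ := abs_le.mp (hdm n)
    rw [hd n, abs_le]
    constructor <;> linarith
  have hmono : ∀ n, m (n+1) ≤ m n := by
    intro n
    rw [hmdef]
    exact max_le (hdm1 n) (hb2 n)
  have hanti : Antitone m := antitone_nat_of_succ_le hmono
  -- d(n+3) = (d(n+1) + 2 d n)/9
  have hd3 : ∀ n, d (n+3) = (d (n+1) + 2 * d n)/9 := by
    intro n
    have h1 := hd (n+1)
    have h2 := hd n
    have e : n + 1 + 2 = n + 3 := by ring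
    have e2 : n + 1 + 1 = n + 2 := by ring
    rw [e, e2, h2] at h1
    rw [h1]; ring
  have hd4 : ∀ n, d (n+4) = (4 * d (n+1) - d n)/27 := by
    intro n
    have h1 := hd (n+2)
    have e : n + 2 + 2 = n + 4 := by ring
    have e2 : n + 2 + 1 = n + 3 := by ring
    rw [e, e2, hd3 n, hd n] at h1
    rw [h1]; ring
  have hcontr : ∀ n, m (n+3) ≤ m n / 3 := by
    intro n
    obtain ⟨hx1, hx2⟩ := abs_le.mp (hdm1 n)
    obtain ⟨hy1, hy2⟩ := abs_le.mp (hdm n)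
    have hb3 : |d (n+3)| ≤ m n / 3 := by
      rw [hd3 n, abs_le]; constructor <;> linarith
    have hb4 : |d (n+4)| ≤ m n / 3 := by
      rw [hd4 n, abs_le]; constructor <;> linarith
    have e : n + 3 + 1 = n + 4 := by ring
    rw [hmdef, e]
    exact max_le hb3 hb4
  have hgeo : ∀ k, m (3*k) ≤ m 0 * (1/3:ℝ)^k := by
    intro k
    induction k with
    | zero => simp
    | succ j ih =>
      have e : 3 * (j+1) = 3*j + 3 := by ring
      rw [e]
      calc m (3*j + 3) ≤ m (3*j) / 3 := hcontr _
        _ ≤ (m 0 * (1/3:ℝ)^j) / 3 := by linarith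
        _ = m 0 * (1/3:ℝ)^(j+1) := by ring
  have h1 : Filter.Tendsto (fun k => m 0 * (1/3:ℝ)^k) Filter.atTop (nhds 0) := by
    have := tendsto_pow_atTop_nhds_zero_of_lt_one (by norm_num : (0:ℝ) ≤ 1/3) (by norm_num)
    simpa using this.const_mul (m 0)
  have h2 : Filter.Tendsto (fun k => m (3*k)) Filter.atTop (nhds 0) :=
    squeeze_zero (fun k => hmnonneg _) hgeo h1
  have hdiv : Filter.Tendsto (fun n : ℕ => n / 3) Filter.atTop Filter.atTop := by
    apply Filter.tendsto_atTop_atTop.mpr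
    intro b
    exact ⟨3*b, fun n hn => Nat.le_div_iff_mul_le (by norm_num) |>.mpr (by omega)⟩
  have h3 : Filter.Tendsto m Filter.atTop (nhds 0) := by
    apply squeeze_zero (fun n => hmnonneg n) (fun n => hanti (by omega : 3 * (n/3) ≤ n))
    exact h2.comp hdiv
  have h4 : Filter.Tendsto d Filter.atTop (nhds 0) :=
    squeeze_zero_norm (fun n => hdm n) h3
  have h5 : Filter.Tendsto (fun n => Real.exp (d n)) Filter.atTop (nhds 1) := by
    have := (Real.continuous_exp.tendsto 0).comp h4
    simpa [Function.comp_def] using this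
  have heq : ∀ n, Real.exp (d n) = g (n+1) / g n := by
    intro n
    rw [hddef]
    simp only [hLdef]
    rw [Real.exp_sub, Real.exp_log (hpos (n+1)), Real.exp_log (hpos n)]
  exact h5.congr (fun n => heq n)
end

section
/- Let T be defined by T(0)=T(1)=0, T(2)=1, T(n+3)=T(n+2)+3T(n+1)+9T(n), and let V be defined by V(0)=-1, V(1)=3, V(n+2) = -2V(n+1) - 3V(n). Then for all n≥1, T(n+1) = (3^n + V(n))/6, i.e., 6·T(n+1) = 3^n + V(n). -/
theorem stmt2 (T V : ℕ → ℤ) (hT0 : T 0 = 0) (hT1 : T 1 = 0) (hT2 : T 2 = 1)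
    (hT : ∀ n, T (n+3) = T (n+2) + 3 * T (n+1) + 9 * T n)
    (hV0 : V 0 = -1) (hV1 : V 1 = 3)
    (hV : ∀ n, V (n+2) = -2 * V (n+1) - 3 * V n) :
    ∀ n ≥ 1, 6 * T (n+1) = 3 ^ n + V n := by
  have key : ∀ n, 6 * T (n+2) = 3 ^ (n+1) + V (n+1)
      ∧ 6 * T (n+3) = 3 ^ (n+2) + V (n+2)
      ∧ 6 * T (n+4) = 3 ^ (n+3) + V (n+3) := by
    intro n
    induction n with
    | zero =>
      have h3 := hT 0
      have h4 := hT 1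
      have v2 := hV 0
      have v3 := hV 1
      refine ⟨?_, ?_, ?_⟩ <;> simp_all
    | succ k ih =>
      obtain ⟨h1, h2, h3⟩ := ih
      refine ⟨h2, h3, ?_⟩
      have ht := hT (k+2)
      have hv1 := hV (k+2)
      have hv2 := hV (k+1)
      have : (3:ℤ) ^ (k+1+3) = 3^(k+3) + 3 * 3^(k+2) + 9 * 3^(k+1) := by ring
      rw [show k+1+4 = k+2+3 from rfl, ht]
      push_cast [this] at *
      linarith
  intro n hn
  obtain ⟨m, rfl⟩ := Nat.exists_eq_add_of_le hn
  have := (key m).1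
  rw [show 1 + m + 1 = m + 2 from by omega, show 1 + m = m + 1 from by omega]
  exact this
end

section
/- Let r,s,t be scalars in a commutative ring. Let h satisfy h(0)=0, h(1)=1, h(2)=r, h(n+3)=r·h(n+2)+s·h(n+1)+t·h(n), and let H satisfy the same recurrence with arbitrary initial values H(0)=a, H(1)=b, H(2)=c. Then for all n ≥ 2 and m ≥ 1, H(n+m) = h(n)·H(m+1) + (s·h(n-1) + t·h(n-2))·H(m) + t·h(n-1)·H(m-1). -/
theorem stmt8 {R : Type*} [CommRing R] (r s t a b c : R)
    (h H : ℕ → R) (hh0 : h 0 = 0) (hh1 : h 1 = 1) (hh2 : h 2 = r)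
    (hh : ∀ n, h (n+3) = r * h (n+2) + s * h (n+1) + t * h n)
    (hH0 : H 0 = a) (hH1 : H 1 = b) (hH2 : H 2 = c)
    (hH : ∀ n, H (n+3) = r * H (n+2) + s * H (n+1) + t * H n) :
    ∀ n ≥ 2, ∀ m ≥ 1, H (n + m) =
      h n * H (m + 1) + (s * h (n-1) + t * h (n-2)) * H m + t * h (n-1) * H (m-1) := by
  have key : ∀ k j, H ((k+2) + (j+1)) =
      h (k+2) * H (j+2) + (s * h (k+1) + t * h k) * H (j+1) + t * h (k+1) * H j := by
    intro k
    induction k with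
    | zero =>
      intro j
      have := hH j
      simp only [hh0, hh1, hh2]
      have e : 2 + (j+1) = j + 3 := by omega
      rw [e, this]; ring
    | succ k ih =>
      intro j
      have e : (k+1+2) + (j+1) = (k+2) + ((j+1)+1) := by omega
      rw [e, ih (j+1)]
      have eh : k + 1 + 2 = k + 3 := by omega
      rw [eh, hh k, hH j]
      ring
  intro n hn m hm
  obtain ⟨k, rfl⟩ : ∃ k, n = k + 2 := ⟨n - 2, by omega⟩
  obtain ⟨j, rfl⟩ : ∃ j, m = j + 1 := ⟨m - 1, by omega⟩
  simpa using key k j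
end

section
/- Let r,s,t,a,b,c be elements of a commutative ring and let H satisfy H(0)=a, H(1)=b, H(2)=c, H(n+3)=r·H(n+2)+s·H(n+1)+t·H(n). Then for all n ≥ 2 (with 2n-4 ≥ 0, i.e., n ≥ 2), H(n)² + s·H(n-1)² + 2t·H(n-1)·H(n-2) = c·H(2n-2) + (s·b + t·a)·H(2n-3) + t·b·H(2n-4). -/
theorem stmt10 {R : Type*} [CommRing R] (r s t a b c : R)
    (H : ℕ → R) (hH0 : H 0 = a) (hH1 : H 1 = b) (hH2 : H 2 = c)
    (hH : ∀ n, H (n+3) = r * H (n+2) + s * H (n+1) + t * H n) :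
    ∀ n ≥ 2, H n ^ 2 + s * H (n-1) ^ 2 + 2 * t * H (n-1) * H (n-2) =
      c * H (2*n - 2) + (s * b + t * a) * H (2*n - 3) + t * b * H (2*n - 4) := by
  have key : ∀ n m : ℕ,
      H (m+2) * H (n+2) + s * H (m+1) * H (n+1)
        + t * (H (m+1) * H n + H m * H (n+1)) =
      c * H (m+n+2) + (s * b + t * a) * H (m+n+1) + t * b * H (m+n) := by
    intro n
    induction n using Nat.strong_induction_on with
    | _ n ih =>
      match n with
      | 0 =>
        intro m
        rw [hH0, hH1, hH2]
        ring
      | 1 =>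
        intro m
        have h3 := hH 0
        have hm := hH m
        norm_num at h3 ⊢
        rw [show m+1+2 = m+3 from rfl, show m+1+1 = m+2 from rfl, hm, h3,
          hH0, hH1, hH2]
        ring
      | 2 =>
        intro m
        have h3 := hH 0
        have h4 := hH 1
        have hm := hH m
        have hm1 := hH (m+1)
        norm_num at h3 h4 ⊢
        rw [show m+2+2 = m+1+3 from rfl, show m+2+1 = m+3 from rfl, hm, hm1,
          hm, h4, h3, hH0, hH1, hH2]
        ring
      | (k+3) =>
        intro m
        have e0 := ih k (by omega) m
        have e1 := ih (k+1) (by omega) m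
        have e2 := ih (k+2) (by omega) m
        rw [show k+3+2 = k+2+3 from rfl, show k+3+1 = k+1+3 from rfl,
          show m+(k+3)+2 = m+k+2+3 from rfl, show m+(k+3)+1 = m+k+1+3 from rfl,
          show m+(k+3) = m+k+3 from rfl,
          hH (k+2), hH (k+1), hH k, hH (m+k+2), hH (m+k+1), hH (m+k)]
        rw [hH (k+1), hH k,
          show m+(k+2)+2 = m+k+1+3 by omega, hH (m+k+1),
          show m+k+1+2 = m+k+3 by omega, show m+(k+2)+1 = m+k+3 by omega,
          hH (m+k)] at e2
        rw [hH k, show m+(k+1)+2 = m+k+3 by omega, hH (m+k)] at e1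
        ring_nf at e0 e1 e2 ⊢
        linear_combination r * e2 + s * e1 + t * e0
  intro n hn
  obtain ⟨k, rfl⟩ : ∃ k, n = k + 2 := ⟨n - 2, by omega⟩
  rw [show k+2-1 = k+1 from rfl, show k+2-2 = k from rfl,
    show 2*(k+2)-2 = k+k+2 by omega, show 2*(k+2)-3 = k+k+1 by omega,
    show 2*(k+2)-4 = k+k by omega]
  linear_combination key k k
end

section
/- Let T(0)=T(1)=0, T(2)=1, T(n+3)=T(n+2)+3T(n+1)+9T(n). Then lim_{n→∞} T(n+1)/3^n = 1/6, i.e., the real sequence n ↦ T(n+1)/3^n converges to 1/6. -/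
theorem stmt15 (T : ℕ → ℤ) (hT0 : T 0 = 0) (hT1 : T 1 = 0) (hT2 : T 2 = 1)
    (hT : ∀ n, T (n+3) = T (n+2) + 3 * T (n+1) + 9 * T n) :
    Filter.Tendsto (fun n => (T (n+1) : ℝ) / 3 ^ n) Filter.atTop (nhds (1/6)) := by
  set S : ℕ → ℤ := fun n => 18 * T n - 3 ^ n with hS
  have hrec : ∀ n, S (n+2) + 2 * S (n+1) + 3 * S n = 0 := by
    intro n
    induction n with
    | zero => simp [hS, hT0, hT1, hT2]
    | succ k ih =>
      simp only [hS] at ih ⊢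
      linear_combination 3 * ih + 18 * hT k
  have hsq : ∀ n, (S (n+1) + S n)^2 + 2 * (S n)^2 = 18 * 3 ^ n := by
    intro n
    induction n with
    | zero => simp [hS, hT0, hT1]
    | succ k ih =>
      have h := hrec k
      linear_combination (S (k+2) - 3 * S k) * h + 3 * ih
  have hbound : ∀ n, (S n)^2 ≤ 9 * 3 ^ n := by
    intro n
    nlinarith [hsq n, sq_nonneg (S (n+1) + S n)]
  have habs : ∀ n, |((S (n+1) : ℝ))| ≤ 9 * (Real.sqrt 3) ^ n := by
    intro n
    have h1 : ((S (n+1) : ℝ))^2 ≤ 81 * 3 ^ n := by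
      have := hbound (n+1)
      have : ((S (n+1) : ℝ))^2 ≤ 9 * 3 ^ (n+1) := by exact_mod_cast this
      calc ((S (n+1) : ℝ))^2 ≤ 9 * 3 ^ (n+1) := this
        _ ≤ 81 * 3 ^ n := by rw [pow_succ]; nlinarith [pow_pos (by norm_num : (0:ℝ) < 3) n]
    have h2 : (9 * (Real.sqrt 3) ^ n)^2 = 81 * 3 ^ n := by
      rw [mul_pow, ← pow_mul, mul_comm n 2, pow_mul, Real.sq_sqrt (by norm_num : (3:ℝ) ≥ 0)]
      norm_num
    have h3 : (0:ℝ) ≤ 9 * (Real.sqrt 3) ^ n := by positivity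
    nlinarith [abs_nonneg ((S (n+1) : ℝ)), sq_abs ((S (n+1) : ℝ))]
  have hb : ∀ n, |(T (n+1) : ℝ) / 3 ^ n - 1/6| ≤ (1/2) * ((Real.sqrt 3)⁻¹) ^ n := by
    intro n
    have h3 : (0:ℝ) < 3 ^ n := by positivity
    have hs3 : (0:ℝ) < Real.sqrt 3 := Real.sqrt_pos.mpr (by norm_num)
    have heq : (T (n+1) : ℝ) / 3 ^ n - 1/6 = (S (n+1) : ℝ) / (18 * 3 ^ n) := by
      simp only [hS]
      push_cast
      field_simp
      ring
    rw [heq, abs_div, abs_of_pos (by positivity : (0:ℝ) < 18 * 3 ^ n)]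
    rw [div_le_iff₀ (by positivity)]
    have hsq3 : (Real.sqrt 3) ^ 2 = 3 := Real.sq_sqrt (by norm_num)
    have key : (1/2) * ((Real.sqrt 3)⁻¹) ^ n * (18 * 3 ^ n) = 9 * (Real.sqrt 3) ^ n := by
      have : (3:ℝ) ^ n = (Real.sqrt 3) ^ n * (Real.sqrt 3) ^ n := by
        rw [← pow_add, ← two_mul, pow_mul, hsq3]
      rw [this]
      field_simp
      have h4 : (Real.sqrt 3) ^ n * ((Real.sqrt 3)⁻¹) ^ n = 1 := by
        rw [← mul_pow, mul_inv_cancel₀ hs3.ne', one_pow]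
      linear_combination (18:ℝ) * h4
    rw [key]
    exact habs n
  have hlt : (Real.sqrt 3)⁻¹ < 1 := by
    rw [inv_lt_one_iff₀]
    right
    nlinarith [Real.sq_sqrt (by norm_num : (3:ℝ) ≥ 0), Real.sqrt_nonneg 3]
  have hpos : (0:ℝ) ≤ (Real.sqrt 3)⁻¹ := by positivity
  have hg : Filter.Tendsto (fun n => (1/2) * ((Real.sqrt 3)⁻¹) ^ n) Filter.atTop (nhds 0) := by
    have := tendsto_pow_atTop_nhds_zero_of_lt_one hpos hlt
    simpa using this.const_mul (1/2 : ℝ)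
  have h0 : Filter.Tendsto (fun n => (T (n+1) : ℝ) / 3 ^ n - 1/6) Filter.atTop (nhds 0) := by
    apply squeeze_zero_norm _ hg
    intro n
    simpa [Real.norm_eq_abs] using hb n
  have := h0.add_const (1/6 : ℝ)
  simpa using this
end

section
/- Let T(0)=T(1)=0, T(2)=1, T(n+3)=T(n+2)+3T(n+1)+9T(n). Then both sequences n ↦ (T(n+2) - 3·T(n+1))/3^(n+1) and n ↦ (T(n+2) - 9·T(n))/3^(n+1) converge to 0 as n → ∞. -/
open Filter

private lemma aux16 (a : ℕ → ℤ) (ha : ∀ n, a (n+2) = -2 * a (n+1) - 3 * a n)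
    (h0 : (a 1)^2 + 2 * a 0 * a 1 + 3 * (a 0)^2 ≤ 6) :
    Filter.Tendsto (fun n => (a n : ℝ) / 3 ^ (n+1)) Filter.atTop (nhds 0) := by
  have hQ : ∀ n, (a (n+1))^2 + 2 * a n * a (n+1) + 3 * (a n)^2
      = 3^n * ((a 1)^2 + 2 * a 0 * a 1 + 3 * (a 0)^2) := by
    intro n
    induction n with
    | zero => ring
    | succ k ih =>
        have h1 : a (k+1+1) = -2 * a (k+1) - 3 * a k := ha k
        linear_combination 3 * ih + (a (k+1+1) - 3 * a k) * h1
  have key : ∀ n, (a n)^2 ≤ 3^(n+1) := by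
    intro n
    have h1 := hQ n
    have h3 : (0:ℤ) ≤ 3^n := by positivity
    have h4 : (3:ℤ)^(n+1) = 3 * 3^n := by ring
    nlinarith [sq_nonneg (a (n+1) + a n), mul_le_mul_of_nonneg_left h0 h3, h4]
  have habs : ∀ n, |(a n : ℝ) / 3 ^ (n+1)| ≤ (Real.sqrt 3 / 3)^(n+1) := by
    intro n
    have h2 : ((a n : ℝ))^2 ≤ (3:ℝ)^(n+1) := by exact_mod_cast key n
    have hA : |(a n : ℝ)| ≤ Real.sqrt 3 ^ (n+1) := by
      have hs : (0:ℝ) ≤ Real.sqrt 3 ^ (n+1) := by positivity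
      have hs2 : (Real.sqrt 3 ^ (n+1))^2 = 3^(n+1) := by
        rw [← pow_mul, mul_comm, pow_mul, Real.sq_sqrt (by norm_num : (0:ℝ) ≤ 3)]
      nlinarith [abs_nonneg ((a n : ℝ)), sq_abs ((a n : ℝ))]
    have hp : (0:ℝ) < 3 ^ (n+1) := by positivity
    rw [abs_div, abs_of_pos hp, div_pow, div_le_div_iff₀ hp (by positivity)]
    calc |(a n : ℝ)| * 3 ^ (n+1) ≤ Real.sqrt 3 ^ (n+1) * 3 ^ (n+1) := by
          exact mul_le_mul_of_nonneg_right hA (le_of_lt hp)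
      _ = Real.sqrt 3 ^ (n+1) * 3 ^ (n+1) := rfl
  have hr0 : (0:ℝ) ≤ Real.sqrt 3 / 3 := by positivity
  have hr1 : Real.sqrt 3 / 3 < 1 := by
    rw [div_lt_one (by norm_num : (0:ℝ) < 3)]
    nlinarith [Real.sq_sqrt (by norm_num : (0:ℝ) ≤ 3),
      Real.sqrt_nonneg 3]
  have hg : Filter.Tendsto (fun n : ℕ => (Real.sqrt 3 / 3)^(n+1)) Filter.atTop (nhds 0) := by
    have := tendsto_pow_atTop_nhds_zero_of_lt_one hr0 hr1
    exact this.comp (tendsto_add_atTop_nat 1)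
  exact squeeze_zero_norm (fun n => by rw [Real.norm_eq_abs]; exact habs n) hg

theorem stmt16 (T : ℕ → ℤ) (hT0 : T 0 = 0) (hT1 : T 1 = 0) (hT2 : T 2 = 1)
    (hT : ∀ n, T (n+3) = T (n+2) + 3 * T (n+1) + 9 * T n) :
    Filter.Tendsto (fun n => ((T (n+2) : ℝ) - 3 * T (n+1)) / 3 ^ (n+1))
        Filter.atTop (nhds 0) ∧
    Filter.Tendsto (fun n => ((T (n+2) : ℝ) - 9 * T n) / 3 ^ (n+1))
        Filter.atTop (nhds 0) := by
  have hT3 : T 3 = 1 := by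
    have h := hT 0
    norm_num [hT0, hT1, hT2] at h
    exact h
  constructor
  · have h := aux16 (fun n => T (n+2) - 3 * T (n+1))
      (fun n => by
        show T (n+4) - 3 * T (n+3) = -2 * (T (n+3) - 3 * T (n+2)) - 3 * (T (n+2) - 3 * T (n+1))
        have h1 : T (n+4) = T (n+3) + 3 * T (n+2) + 9 * T (n+1) := hT (n+1)
        linear_combination h1)
      (by show (T 3 - 3 * T 2)^2 + 2 * (T 2 - 3 * T 1) * (T 3 - 3 * T 2)
            + 3 * (T 2 - 3 * T 1)^2 ≤ 6
          rw [hT3, hT2, hT1]; norm_num)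
    exact h.congr fun n => by push_cast; ring
  · have h := aux16 (fun n => T (n+2) - 9 * T n)
      (fun n => by
        show T (n+4) - 9 * T (n+2) = -2 * (T (n+3) - 9 * T (n+1)) - 3 * (T (n+2) - 9 * T n)
        have h1 : T (n+4) = T (n+3) + 3 * T (n+2) + 9 * T (n+1) := hT (n+1)
        have h2 : T (n+3) = T (n+2) + 3 * T (n+1) + 9 * T n := hT n
        linear_combination h1 + 3 * h2)
      (by show (T 3 - 9 * T 1)^2 + 2 * (T 2 - 9 * T 0) * (T 3 - 9 * T 1)
            + 3 * (T 2 - 9 * T 0)^2 ≤ 6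
          rw [hT3, hT2, hT1, hT0]; norm_num)
    exact h.congr fun n => by push_cast; ring
end

section
/- Let μ > 0 be a real number such that the positive sequence g satisfying g(n+3)³ = g(n+2)·g(n+1)·g(n) has g(n+1)/g(n) → μ. Then μ⁶ = 1, and hence μ = 1. -/
theorem stmt17 (g : ℕ → ℝ) (hgpos : ∀ n, 0 < g n)
    (hg : ∀ n, g (n+3) ^ 3 = g (n+2) * g (n+1) * g n)
    (μ : ℝ) (hμ : 0 < μ)
    (hlim : Filter.Tendsto (fun n => g (n+1) / g n) Filter.atTop (nhds μ)) :
    μ ^ 6 = 1 ∧ μ = 1 := by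
  set r : ℕ → ℝ := fun n => g (n+1) / g n with hr
  have hμ3 : (μ : ℝ) ^ 3 ≠ 0 := by positivity
  have hshift2 : Filter.Tendsto (fun n => r (n+2)) Filter.atTop (nhds μ) :=
    hlim.comp (Filter.tendsto_add_atTop_nat 2)
  have hshift1 : Filter.Tendsto (fun n => r (n+1)) Filter.atTop (nhds μ) :=
    hlim.comp (Filter.tendsto_add_atTop_nat 1)
  have h1 : Filter.Tendsto (fun n => (r (n+2)) ^ 3) Filter.atTop (nhds (μ ^ 3)) :=
    hshift2.pow 3
  have h2 : Filter.Tendsto (fun n => ((r (n+1)) ^ 2 * r n)⁻¹) Filter.atTop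
      (nhds ((μ ^ 2 * μ)⁻¹)) := by
    exact ((hshift1.pow 2).mul hlim).inv₀ (by positivity)
  have heq : (fun n => (r (n+2)) ^ 3) = (fun n => ((r (n+1)) ^ 2 * r n)⁻¹) := by
    funext n
    have h0 := hgpos n
    have h1 := hgpos (n+1)
    have h2 := hgpos (n+2)
    have h3 := hgpos (n+3)
    simp only [hr]
    have hrec := hg n
    field_simp
    linear_combination hrec
  rw [heq] at h1
  have hkey : μ ^ 3 = (μ ^ 2 * μ)⁻¹ := tendsto_nhds_unique h1 h2
  have h6 : μ ^ 6 = 1 := by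
    have : μ ^ 3 * (μ ^ 2 * μ) = 1 := by
      rw [hkey]; field_simp
    nlinarith [this]
  refine ⟨h6, ?_⟩
  nlinarith [h6, sq_nonneg (μ - 1), sq_nonneg (μ + 1), sq_nonneg μ, sq_nonneg (μ^2 - 1), sq_nonneg (μ^3 - 1), sq_nonneg (μ^2 + μ)]
end
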